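/- Let q be a prime power, let r ≥ 1 and h ≥ 1, and let 𝒮 be a faithful projective h-(n,r,s,μ)_q system. Then: (a) Σ_P m_𝒮(P) = n·[h]_q, the sum being over all points P of F_q^r; (b) for every hyperplane H of F_q^r, Σ_{P ≤ H} m_𝒮(P) = n·[h−1]_q + c_𝒮(H)·q^{h−1}; (c) the maximum over all hyperplanes H of Σ_{P ≤ H} m_𝒮(P) equals n·[h−1]_q + s·q^{h−1}, and the maximum over all points P of m_𝒮(P) equals μ; (d) for every hyperplane H, Σ_{P ≤ H} m_𝒮(P) ≡ n·[h]_q (mod q^{h−1}), i.e., the multiset of points P ↦ m_𝒮(P) is q^{h−1}-divisible. -/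

import Mathlib

open scoped Classical

noncomputable section

/-- `[i]_q = 1 + q + ⋯ + q^(i-1)`, with `[0]_q = 0`. -/
def gNum (q i : ℕ) : ℕ := ∑ j ∈ Finset.range i, q ^ j

/-- The number of elements of the multiset `S` of subspaces contained in the subspace `U`,
counted with multiplicity. -/
def cnt {F V : Type*} [Field F] [AddCommGroup V] [Module F V]
    (S : Multiset (Submodule F V)) (U : Submodule F V) : ℕ :=
  Multiset.countP (fun W => W ≤ U) S

/-- The number of elements of the multiset `S` of subspaces that contain the subspace `P`,
counted with multiplicity. -/
def mult {F V : Type*} [Field F] [AddCommGroup V] [Module F V]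
    (S : Multiset (Submodule F V)) (P : Submodule F V) : ℕ :=
  Multiset.countP (fun W => P ≤ W) S

/-- The sum `Σ_{P ≤ U, P a point} m_S(P)` over all points (one-dimensional subspaces)
contained in `U`. -/
def wsum {F : Type*} [Field F] [Fintype F] {r : ℕ}
    (S : Multiset (Submodule F (Fin r → F))) (U : Submodule F (Fin r → F)) : ℕ :=
  ∑ᶠ P ∈ {P : Submodule F (Fin r → F) | Module.finrank F P = 1 ∧ P ≤ U}, mult S P

open Module

lemma gNum_succ (q d : ℕ) : gNum q (d+1) = gNum q d + q ^ d := Finset.sum_range_succ _ _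

lemma gNum_mul (q : ℕ) (hq : 1 ≤ q) (d : ℕ) : (q - 1) * gNum q d + 1 = q ^ d := by
  obtain ⟨p, rfl⟩ : ∃ p, q = p + 1 := ⟨q - 1, by omega⟩
  induction d with
  | zero => simp [gNum]
  | succ d ih =>
    rw [gNum_succ]
    calc (p + 1 - 1) * (gNum (p+1) d + (p+1) ^ d) + 1
        = ((p + 1 - 1) * gNum (p+1) d + 1) + p * (p+1)^d := by simp; ring
      _ = (p+1) ^ d + p * (p+1)^d := by rw [ih]
      _ = (p+1) ^ (d+1) := by ring

section CardPoints

variable {F V : Type*} [Field F] [Fintype F] [AddCommGroup V] [Module F V] [Fintype V]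

instance : Finite (Submodule F V) :=
  Finite.of_injective (fun P => (P : Set V)) SetLike.coe_injective

lemma card_points [Fintype (Submodule F V)] (W : Submodule F V) :
    (Finset.univ.filter fun P : Submodule F V => finrank F P = 1 ∧ P ≤ W).card
      = gNum (Fintype.card F) (finrank F W) := by
  have hF : 1 < Fintype.card F := Fintype.one_lt_card
  set q := Fintype.card F
  set d := finrank F W with hd
  set t := Finset.univ.filter fun P : Submodule F V => finrank F P = 1 ∧ P ≤ W with ht
  set s : Finset V := Set.toFinset ((W : Set V) \ {0}) with hs
  have hmem : ∀ v ∈ s, (Submodule.span F {v}) ∈ t := by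
    intro v hv
    rw [hs, Set.mem_toFinset] at hv
    obtain ⟨hvW, hv0⟩ := hv
    simp only [ht, Finset.mem_filter, Finset.mem_univ, true_and]
    exact ⟨finrank_span_singleton (by simpa using hv0),
      (Submodule.span_singleton_le_iff_mem _ _).2 hvW⟩
  have key := Finset.card_eq_sum_card_fiberwise hmem
  have hfiber : ∀ P ∈ t, (s.filter fun v => Submodule.span F {v} = P).card = q - 1 := by
    intro P hP
    simp only [ht, Finset.mem_filter, Finset.mem_univ, true_and] at hP
    obtain ⟨hP1, hPW⟩ := hP
    have : (s.filter fun v => Submodule.span F {v} = P) = Set.toFinset ((P : Set V) \ {0}) := by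
      ext v
      simp only [Finset.mem_filter, hs, Set.mem_toFinset, Set.mem_diff, Set.mem_singleton_iff,
        SetLike.mem_coe]
      constructor
      · rintro ⟨⟨hvW, hv0⟩, hsp⟩
        exact ⟨hsp ▸ Submodule.mem_span_singleton_self v, hv0⟩
      · rintro ⟨hvP, hv0⟩
        have hle : Submodule.span F {v} ≤ P := (Submodule.span_singleton_le_iff_mem _ _).2 hvP
        have heq : Submodule.span F {v} = P :=
          Submodule.eq_of_le_of_finrank_le hle
            (by rw [hP1, finrank_span_singleton (by simpa using hv0)])
        exact ⟨⟨hPW hvP, hv0⟩, heq⟩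
    rw [this]
    have h1 : ((P : Set V) \ {0}).toFinset.card = Fintype.card P - 1 := by
      rw [Set.toFinset_diff, Finset.card_sdiff_of_subset (by simp [Submodule.zero_mem])]
      simp [Set.toFinset_card]
    rw [h1, card_eq_pow_finrank (K := F) (V := P), hP1, pow_one]
  have hscard : s.card = q ^ d - 1 := by
    rw [hs, Set.toFinset_diff, Finset.card_sdiff_of_subset (by simp [Submodule.zero_mem])]
    simp [Set.toFinset_card, card_eq_pow_finrank (K := F) (V := W), hd]
    rfl
  rw [hscard, Finset.sum_congr rfl hfiber, Finset.sum_const, smul_eq_mul] at key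
  have hg := gNum_mul q (by omega) d
  have hq1 : 0 < q - 1 := by omega
  refine Nat.eq_of_mul_eq_mul_right hq1 ?_
  rw [← key, mul_comm (gNum q d) (q - 1)]
  omega

end CardPoints

lemma sum_countP {α β : Type*} (t : Finset α) (S : Multiset β) (p : α → β → Prop) :
    ∑ P ∈ t, S.countP (p P) = (S.map fun W => (t.filter fun P => p P W).card).sum := by
  induction S using Multiset.induction with
  | empty => simp
  | cons a S ih =>
    simp only [Multiset.countP_cons, Multiset.map_cons, Multiset.sum_cons,
      Finset.sum_add_distrib, ih, Finset.card_filter]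
    ring

lemma sum_map_ite {β : Type*} (S : Multiset β) (p : β → Prop) (c : ℕ) :
    (S.map fun W => if p W then c else 0).sum = S.countP p * c := by
  induction S using Multiset.induction with
  | empty => simp
  | cons a S ih =>
    simp only [Multiset.countP_cons, Multiset.map_cons, Multiset.sum_cons, ih]
    by_cases h : p a
    · simp [h]; ring
    · simp [h]

lemma rank_inf {F V : Type*} [Field F] [AddCommGroup V] [Module F V] [FiniteDimensional F V]
    (H W : Submodule F V) (hH : finrank F H = finrank F V - 1)
    (hW : 1 ≤ finrank F W) (hn : ¬ W ≤ H) :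
    finrank F (W ⊓ H : Submodule F V) = finrank F W - 1 := by
  have h1 := Submodule.finrank_sup_add_finrank_inf_eq W H
  have hWle : finrank F W ≤ finrank F V := Submodule.finrank_le W
  have hsuple : finrank F (W ⊔ H : Submodule F V) ≤ finrank F V := Submodule.finrank_le _
  have hlt : H < W ⊔ H := lt_of_le_of_ne le_sup_right (fun he => hn (he ▸ le_sup_left))
  have h2 : finrank F H < finrank F (W ⊔ H : Submodule F V) :=
    Submodule.finrank_lt_finrank_of_lt hlt
  omega

lemma wsum_eq {F : Type*} [Field F] [Fintype F] {r : ℕ}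
    [Fintype (Submodule F (Fin r → F))]
    (S : Multiset (Submodule F (Fin r → F))) (U : Submodule F (Fin r → F)) :
    wsum S U = (S.map fun W => gNum (Fintype.card F)
      (finrank F (W ⊓ U : Submodule F (Fin r → F)))).sum := by
  have hset : {P : Submodule F (Fin r → F) | finrank F P = 1 ∧ P ≤ U}
      = ↑(Finset.univ.filter fun P : Submodule F (Fin r → F) => finrank F P = 1 ∧ P ≤ U) := by
    ext P; simp
  rw [wsum, hset, finsum_mem_coe_finset]
  rw [show (∑ P ∈ (Finset.univ.filter fun P : Submodule F (Fin r → F) =>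
      finrank F P = 1 ∧ P ≤ U), mult S P)
    = (S.map fun W => ((Finset.univ.filter fun P : Submodule F (Fin r → F) =>
        finrank F P = 1 ∧ P ≤ U).filter fun P => P ≤ W).card).sum
    from sum_countP _ S (fun P W => P ≤ W)]
  apply congrArg
  apply Multiset.map_congr rfl
  intro W _
  rw [← card_points (W ⊓ U)]
  congr 1
  ext P
  simp only [Finset.mem_filter, Finset.mem_univ, true_and, le_inf_iff]
  tauto

theorem statement5 (F : Type*) [Field F] [Fintype F] (q r h n s μ : ℕ)
    (hq : q = Fintype.card F) (hr : 1 ≤ r) (hh : 1 ≤ h)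
    (S : Multiset (Submodule F (Fin r → F)))
    -- `S` is a faithful projective `h-(n,r,s,μ)_q` system:
    (hcard : Multiset.card S = n)
    (hfaithful : ∀ W ∈ S, Module.finrank F W = h)
    (hhyp : ∀ H : Submodule F (Fin r → F), Module.finrank F H = r - 1 → cnt S H ≤ s)
    (hhyp' : ∃ H : Submodule F (Fin r → F), Module.finrank F H = r - 1 ∧ cnt S H = s)
    (hpt : ∀ P : Submodule F (Fin r → F), Module.finrank F P = 1 → mult S P ≤ μ)
    (hpt' : ∃ P : Submodule F (Fin r → F), Module.finrank F P = 1 ∧ mult S P = μ) :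
    -- (a)
    wsum S ⊤ = n * gNum q h ∧
    -- (b)
    (∀ H : Submodule F (Fin r → F), Module.finrank F H = r - 1 →
      wsum S H = n * gNum q (h - 1) + cnt S H * q ^ (h - 1)) ∧
    -- (c)
    IsGreatest {x : ℕ | ∃ H : Submodule F (Fin r → F),
        Module.finrank F H = r - 1 ∧ wsum S H = x}
      (n * gNum q (h - 1) + s * q ^ (h - 1)) ∧
    IsGreatest {x : ℕ | ∃ P : Submodule F (Fin r → F),
        Module.finrank F P = 1 ∧ mult S P = x} μ ∧
    -- (d)
    (∀ H : Submodule F (Fin r → F), Module.finrank F H = r - 1 →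
      wsum S H ≡ n * gNum q h [MOD q ^ (h - 1)]) := by
  subst hq
  haveI : Fintype (Submodule F (Fin r → F)) := Fintype.ofFinite _
  set q := Fintype.card F with hq
  have hfr : finrank F (Fin r → F) = r := Module.finrank_fin_fun F
  have hh1 : h - 1 + 1 = h := by omega
  have hgh : gNum q h = gNum q (h-1) + q ^ (h-1) := by
    have := gNum_succ q (h-1)
    rw [hh1] at this
    exact this
  -- (a)
  have ha : wsum S ⊤ = n * gNum q h := by
    rw [wsum_eq]
    have hmapa : S.map (fun W => gNum q (finrank F (W ⊓ ⊤ : Submodule F (Fin r → F))))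
        = S.map (fun _ => gNum q h) :=
      Multiset.map_congr rfl (fun W hW => by rw [inf_top_eq, hfaithful W hW])
    rw [hmapa, Multiset.map_const', Multiset.sum_replicate, hcard, smul_eq_mul]
  -- (b)
  have hb : ∀ H : Submodule F (Fin r → F), finrank F H = r - 1 →
      wsum S H = n * gNum q (h - 1) + cnt S H * q ^ (h - 1) := by
    intro H hH
    rw [wsum_eq]
    have hcong : S.map (fun W => gNum q (finrank F (W ⊓ H : Submodule F (Fin r → F))))
        = S.map (fun W => gNum q (h-1) + (if W ≤ H then q ^ (h-1) else 0)) := by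
      apply Multiset.map_congr rfl
      intro W hW
      by_cases hle : W ≤ H
      · rw [inf_eq_left.2 hle, hfaithful W hW, hgh]
        simp [hle]
      · rw [rank_inf H W (by rw [hH, hfr]) (by rw [hfaithful W hW]; omega) hle,
          hfaithful W hW]
        simp [hle]
    rw [hcong, Multiset.sum_map_add, Multiset.map_const', Multiset.sum_replicate, hcard,
      smul_eq_mul, sum_map_ite]
    rfl
  refine ⟨ha, hb, ?_, ?_, ?_⟩
  · obtain ⟨H, hH, hsH⟩ := hhyp'
    constructor
    · exact ⟨H, hH, by rw [hb H hH, hsH]⟩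
    · rintro x ⟨H', hH', rfl⟩
      rw [hb H' hH']
      exact Nat.add_le_add_left (Nat.mul_le_mul_right _ (hhyp H' hH')) _
  · exact ⟨hpt', by rintro x ⟨P, hP, rfl⟩; exact hpt P hP⟩
  · intro H hH
    rw [hb H hH, hgh, Nat.mul_add]
    exact Nat.ModEq.add_left _ (by simp [Nat.ModEq, Nat.mul_mod_left])
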